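/- arXiv:1607.02970 — 2 statements merged into one kernel-verified Lean document; each statement's English description precedes it below -/
import Mathlib

section
/- For a finite sequential procedure P and k ∈ ℕ, define π_k(P) recursively by π_k(const c) = const c if c ≤ k else const ⊥, and π_k(query i Q B) = query i (π_k Q) (a ↦ if a ≤ k then π_k(B a) else const ⊥). Then for all tuples f⃗ of monotone functions ℕ⊥ → ℕ⊥ whose components map into {⊥,0,…,k} and are ⊥ outside {⊥,0,…,k}-truncated inputs, ⟦π_k(P)⟧(f⃗) = π_k(⟦P⟧(f⃗)). -/
/-- Flat order on ℕ⊥. -/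
def fle (x y : WithBot ℕ) : Prop := x = ⊥ ∨ x = y

/-- Monotone w.r.t. the flat order. -/
def Mono (f : WithBot ℕ → WithBot ℕ) : Prop := ∀ x y, fle x y → fle (f x) (f y)

/-- Pointwise flat order on functions. -/
def ple (f g : WithBot ℕ → WithBot ℕ) : Prop := ∀ x, fle (f x) (g x)

/-- Truncation π_k. -/
def pik (k : ℕ) (x : WithBot ℕ) : WithBot ℕ :=
  WithBot.recBotCoe ⊥ (fun m => if m ≤ k then (m : WithBot ℕ) else ⊥) x

/-- Π_k(f) = π_k ∘ f ∘ π_k. -/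
def Pif (k : ℕ) (f : WithBot ℕ → WithBot ℕ) : WithBot ℕ → WithBot ℕ :=
  fun x => pik k (f (pik k x))

/-- Strictification. -/
def strictify (f : WithBot ℕ → WithBot ℕ) : WithBot ℕ → WithBot ℕ :=
  fun x => WithBot.recBotCoe ⊥ (fun m => f (m : WithBot ℕ)) x

inductive Proc (n : ℕ) : Type where
  | const : WithBot ℕ → Proc n
  | query : Fin n → Proc n → (ℕ → Proc n) → Proc n

inductive FiniteProc {n : ℕ} : Proc n → Prop where
  | const (c) : FiniteProc (Proc.const c)
  | query (i Q B) : FiniteProc Q → (∀ a, FiniteProc (B a)) →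
      {a | B a ≠ Proc.const ⊥}.Finite → FiniteProc (Proc.query i Q B)

def denot {n : ℕ} : Proc n → (Fin n → WithBot ℕ → WithBot ℕ) → WithBot ℕ
  | .const c, _ => c
  | .query i Q B, f =>
      WithBot.recBotCoe ⊥ (fun a => denot (B a) f) (f i (denot Q f))

/-- Componentwise-pointwise order on tuples. -/
def tle {n : ℕ} (f g : Fin n → WithBot ℕ → WithBot ℕ) : Prop := ∀ i, ple (f i) (g i)

/-- Monotone functional. -/
def MonoF {n : ℕ} (F : (Fin n → WithBot ℕ → WithBot ℕ) → WithBot ℕ) : Prop :=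
  ∀ f g, tle f g → fle (F f) (F g)

/-- Π⃗_k componentwise. -/
def Pivec {n : ℕ} (k : ℕ) (f : Fin n → WithBot ℕ → WithBot ℕ) :
    Fin n → WithBot ℕ → WithBot ℕ := fun i => Pif k (f i)

open Classical in
/-- Strictify coordinates in S. -/
noncomputable def strictifyS {n : ℕ} (S : Set (Fin n))
    (f : Fin n → WithBot ℕ → WithBot ℕ) : Fin n → WithBot ℕ → WithBot ℕ :=
  fun i => if i ∈ S then strictify (f i) else f i

/-- F_S = F ∘ strictify_S. -/
noncomputable def FS {n : ℕ} (F : (Fin n → WithBot ℕ → WithBot ℕ) → WithBot ℕ)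
    (S : Set (Fin n)) : (Fin n → WithBot ℕ → WithBot ℕ) → WithBot ℕ :=
  fun f => F (strictifyS S f)

def pproj {n : ℕ} (k : ℕ) : Proc n → Proc n
  | .const c => .const (pik k c)
  | .query i Q B =>
      .query i (pproj k Q) (fun a => if a ≤ k then pproj k (B a) else .const ⊥)

/-! By induction on `P`. A level-`k` function `g = π_k ∘ g ∘ π_k` cannot distinguish `x`
from `π_k x`, and all its values are `≤ k`, so truncating the query argument is harmless and the
branches `a > k` that `pproj` prunes are never reached. -/

lemma pik_bot (k : ℕ) : pik k ⊥ = ⊥ := rfl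

lemma pik_coe (k m : ℕ) : pik k m = if m ≤ k then (m : WithBot ℕ) else ⊥ := rfl

lemma le_of_pik_coe_eq {k m : ℕ} (h : pik k m = m) : m ≤ k := by
  by_contra hmk
  simp [pik_coe, hmk] at h

lemma pik_pik (k : ℕ) (x : WithBot ℕ) : pik k (pik k x) = pik k x := by
  cases x with
  | bot => rfl
  | coe m =>
    rw [← Nat.cast_withBot]
    by_cases h : m ≤ k
    · rw [pik_coe, if_pos h, pik_coe, if_pos h]
    · rw [pik_coe, if_neg h, pik_bot]

section Level

variable {k : ℕ} {g : WithBot ℕ → WithBot ℕ}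

lemma pik_apply_of_eq_Pif (hg : g = Pif k g) (x : WithBot ℕ) : pik k (g x) = g x := by
  rw [hg, Pif, pik_pik]

lemma apply_pik_of_eq_Pif (hg : g = Pif k g) (x : WithBot ℕ) : g (pik k x) = g x := by
  rw [hg, Pif, Pif, pik_pik]

end Level

theorem stmt10_general (n k : ℕ) (P : Proc n)
    (f : Fin n → WithBot ℕ → WithBot ℕ)
    (hlev : ∀ i, f i = Pif k (f i)) :
    denot (pproj k P) f = pik k (denot P f) := by
  induction P with
  | const c => rfl
  | query i Q B ihQ ihB =>
    simp only [pproj, denot, ihQ, apply_pik_of_eq_Pif (hlev i)]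
    cases hy : f i (denot Q f) with
    | bot => rfl
    | coe a =>
      rw [← Nat.cast_withBot] at hy
      have ha : a ≤ k := le_of_pik_coe_eq (by rw [← hy, pik_apply_of_eq_Pif (hlev i)])
      simp only [WithBot.recBotCoe_coe, if_pos ha, ihB]

/-- for level-k tuples, the denotation of π_k(P) equals the
k-truncation of the denotation of P. -/
theorem stmt10 (n k : ℕ) (P : Proc n) (hP : FiniteProc P)
    (f : Fin n → WithBot ℕ → WithBot ℕ) (hf : ∀ i, Mono (f i))
    (hlev : ∀ i, f i = Pif k (f i)) :
    denot (pproj k P) f = pik k (denot P f) :=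
  stmt10_general n k P f hlev
end

section
/- If i ∈ S and P = query i (query j R C) B is a finite sequential procedure, let P̂ = query j R (b ↦ query i (C b) B). Then for every tuple f⃗ of monotone functions with f_i strict, ⟦P⟧(f⃗) = ⟦P̂⟧(f⃗). -/
theorem WithBot.apply_recBotCoe_bot {α β γ : Type*} (g : WithBot β → WithBot γ)
    (hg : g ⊥ = ⊥) (k : α → WithBot β) (x : WithBot α) :
    g (x.recBotCoe ⊥ k) = x.recBotCoe ⊥ (g ∘ k) := by
  cases x <;> simp [hg]

theorem stmt17_general (n : ℕ) (i j : Fin n) (R : Proc n) (C B : ℕ → Proc n)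
    (f : Fin n → WithBot ℕ → WithBot ℕ)
    (hstrict : f i ⊥ = ⊥) :
    denot (Proc.query i (Proc.query j R C) B) f =
      denot (Proc.query j R (fun b => Proc.query i (C b) B)) f := by
  simp only [denot]
  -- The outer query of the left side is a strict map (since `f i` is) applied to a case split on
  -- `f j ⟦R⟧`; pushing it into both branches gives the right side.
  exact WithBot.apply_recBotCoe_bot
    (fun y => WithBot.recBotCoe ⊥ (fun a => denot (B a) f) (f i y)) (by simp [hstrict]) _ _

/-- Case 2.3 of Lemma 2.5: if f_i is strict, swapping the inner
query outwards does not change the denotation. -/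
theorem stmt17 (n : ℕ) (i j : Fin n) (R : Proc n) (C B : ℕ → Proc n)
    (hP : FiniteProc (Proc.query i (Proc.query j R C) B))
    (f : Fin n → WithBot ℕ → WithBot ℕ) (hf : ∀ a, Mono (f a))
    (hstrict : f i ⊥ = ⊥) :
    denot (Proc.query i (Proc.query j R C) B) f =
      denot (Proc.query j R (fun b => Proc.query i (C b) B)) f :=
  stmt17_general n i j R C B f hstrict
end
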